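/- For E = E(U, b, f_1, …, f_{k−1}) one has ann^j(E) = 0 × 0 × … × 0 × F × … × F (the zero subspace of U, together with zeros in the first k−j scalar slots and F in the last j scalar slots) for j = 1, …, k, and ann^{k+1}(E) = E. -/

import Mathlib

variable {F : Type*} [Field F] {A : Type*} [AddCommGroup A] [Module F A]

/-- For a bilinear multiplication `mul` on `A` and a submodule `S`, the preimage in `A` of the
annihilator of `A/S`, i.e. `{x | x·A ⊆ S and A·x ⊆ S}`. -/
def annSucc (mul : A →ₗ[F] A →ₗ[F] A) (S : Submodule F A) : Submodule F A where
  carrier := {x | ∀ y : A, mul x y ∈ S ∧ mul y x ∈ S}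
  zero_mem' := by intro y; simp
  add_mem' := by
    intro a b ha hb y
    refine ⟨?_, ?_⟩
    · simpa [map_add, LinearMap.add_apply] using S.add_mem (ha y).1 (hb y).1
    · simpa [map_add, LinearMap.add_apply] using S.add_mem (ha y).2 (hb y).2
  smul_mem' := by
    intro c a ha y
    refine ⟨?_, ?_⟩
    · simpa [map_smul, LinearMap.smul_apply] using S.smul_mem c (ha y).1
    · simpa [map_smul, LinearMap.smul_apply] using S.smul_mem c (ha y).2

/-- The upper annihilating series: `annSeq mul 0 = 0`, and
`annSeq mul (i+1)` is the preimage in `A` of `ann(A / annSeq mul i)`. -/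
def annSeq (mul : A →ₗ[F] A →ₗ[F] A) : ℕ → Submodule F A
  | 0 => ⊥
  | i + 1 => annSucc mul (annSeq mul i)

/-- A basis is natural if the product of distinct basis vectors vanishes. -/
def IsNaturalBasis {ι : Type*} (mul : A →ₗ[F] A →ₗ[F] A) (e : Module.Basis ι F A) : Prop :=
  ∀ i j, i ≠ j → mul (e i) (e j) = 0

/-- An evolution algebra: a commutative algebra admitting a natural basis. -/
def IsEvolutionAlgebra (mul : A →ₗ[F] A →ₗ[F] A) : Prop :=
  (∀ x y, mul x y = mul y x) ∧ ∃ (n : ℕ) (e : Module.Basis (Fin n) F A), IsNaturalBasis mul e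

/-- The (nilpotent) algebra `(A, mul)` has type `[n_1, …, n_r]`:  `r` is the least index with
`ann^r(A) = A` and `n_i = dim ann^i(A) - dim ann^{i-1}(A)`. -/
def HasType (mul : A →ₗ[F] A →ₗ[F] A) (L : List ℕ) : Prop :=
  annSeq mul L.length = ⊤ ∧ (∀ j < L.length, annSeq mul j ≠ ⊤) ∧
  ∀ (i : ℕ) (h : i < L.length),
    L.get ⟨i, h⟩ =
      Module.finrank F (annSeq mul (i + 1)) - Module.finrank F (annSeq mul i)

/- If `(u, α)` lies in `ann^{j+1}(E)` with `j ≤ k - 1`, then its product with `(y, 0)` lies in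
`ann^j(E)`, whose scalar slot `0` vanishes; that slot is `b(u, y)`, so `u = 0` by nondegeneracy.
The scalar part then moves up one slot per step, since slot `i + 1` of `(0, α) · (0, e_i)` is
`α_i`. Finally every product has zero `U`-part, so `ann^{k+1}(E) = E`. -/

lemma annSucc_eq_top {mul : A →ₗ[F] A →ₗ[F] A} {S : Submodule F A}
    (h : ∀ x y, mul x y ∈ S) : annSucc mul S = ⊤ :=
  eq_top_iff.mpr fun x _ y => ⟨h x y, h y x⟩

namespace EUbf

variable {U : Type*} [AddCommGroup U] [Module F U] {m : ℕ}

/-- The product of `E(U, b, f_1, …, f_m)` on `U × F^{m+1}`: scalar slot `0` carries `b`, and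
slot `j + 1` carries `f j`, the paper's `f_{j+1}`. -/
def IsMul (b : U →ₗ[F] U →ₗ[F] F) (f : Fin m → U →ₗ[F] U)
    (mul : (U × (Fin (m + 1) → F)) →ₗ[F] (U × (Fin (m + 1) → F)) →ₗ[F] (U × (Fin (m + 1) → F))) :
    Prop :=
  ∀ (x y : U) (α β : Fin (m + 1) → F),
    mul (x, α) (y, β) =
      (0, Fin.cases (motive := fun _ => F) (b x y)
          (fun j : Fin m => b (f j x) y + α j.castSucc * β j.castSucc))

/-- `0 × 0 × ⋯ × 0 × F × ⋯ × F`, with `F` in the last `j` of the `m + 1` scalar slots. -/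
def tailSubmodule (m j : ℕ) : Submodule F (U × (Fin (m + 1) → F)) where
  carrier := {p | p.1 = 0 ∧ ∀ i : Fin (m + 1), (i : ℕ) + j < m + 1 → p.2 i = 0}
  zero_mem' := ⟨rfl, fun _ _ => rfl⟩
  add_mem' := by
    rintro p q ⟨hp1, hp2⟩ ⟨hq1, hq2⟩
    exact ⟨by simp [hp1, hq1], fun i hi => by simp [hp2 i hi, hq2 i hi]⟩
  smul_mem' := by
    rintro c p ⟨hp1, hp2⟩
    exact ⟨by simp [hp1], fun i hi => by simp [hp2 i hi]⟩

lemma mem_tailSubmodule {j : ℕ} {p : U × (Fin (m + 1) → F)} :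
    p ∈ tailSubmodule m j ↔ p.1 = 0 ∧ ∀ i : Fin (m + 1), (i : ℕ) + j < m + 1 → p.2 i = 0 :=
  Iff.rfl

lemma tailSubmodule_zero : tailSubmodule (F := F) (U := U) m 0 = ⊥ := by
  ext ⟨x, α⟩
  simp only [mem_tailSubmodule, add_zero, Fin.is_lt, forall_const, Submodule.mem_bot,
    Prod.mk_eq_zero, funext_iff, Pi.zero_apply]

variable {b : U →ₗ[F] U →ₗ[F] F} {f : Fin m → U →ₗ[F] U}
  {mul : (U × (Fin (m + 1) → F)) →ₗ[F] (U × (Fin (m + 1) → F)) →ₗ[F] (U × (Fin (m + 1) → F))}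

lemma mul_mem_tailSubmodule_top (hmul : IsMul b f mul) (p q : U × (Fin (m + 1) → F)) :
    mul p q ∈ tailSubmodule m (m + 1) :=
  ⟨by rw [hmul], fun i hi => absurd hi (by omega)⟩

lemma mul_mem_tailSubmodule_of_mem_succ (hmul : IsMul b f mul) {j : ℕ} {p : U × (Fin (m + 1) → F)}
    (hp : p ∈ tailSubmodule m (j + 1)) (q : U × (Fin (m + 1) → F)) :
    mul p q ∈ tailSubmodule m j ∧ mul q p ∈ tailSubmodule m j := by
  obtain ⟨x, α⟩ := p
  obtain ⟨y, β⟩ := q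
  obtain ⟨rfl, hα⟩ := hp
  refine ⟨⟨by rw [hmul], fun i hi => ?_⟩, ⟨by rw [hmul], fun i hi => ?_⟩⟩
  all_goals
    rw [hmul]
    cases i using Fin.cases with
    | zero => simp
    | succ i =>
      have hαi : α i.castSucc = 0 := hα _ (by simp at hi ⊢; omega)
      simp [hαi]

lemma fst_eq_zero_of_mem_annSucc (hbnd : ∀ x : U, (∀ y : U, b x y = 0) → x = 0)
    (hmul : IsMul b f mul) {j : ℕ} (hj : j ≤ m) {p : U × (Fin (m + 1) → F)}
    (hp : p ∈ annSucc mul (tailSubmodule m j)) : p.1 = 0 := by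
  obtain ⟨x, α⟩ := p
  refine hbnd x fun y => ?_
  have hslot := ((hp (y, 0)).1).2 0 (by simp; omega)
  rw [hmul] at hslot
  simpa using hslot

lemma snd_eq_zero_of_mem_annSucc (hmul : IsMul b f mul) {j : ℕ} {p : U × (Fin (m + 1) → F)}
    (hp : p ∈ annSucc mul (tailSubmodule m j)) (hp1 : p.1 = 0) {i : Fin (m + 1)}
    (hi : (i : ℕ) + (j + 1) < m + 1) : p.2 i = 0 := by
  obtain ⟨x, α⟩ := p
  obtain rfl : x = 0 := hp1
  obtain ⟨i, rfl⟩ : ∃ i' : Fin m, i'.castSucc = i := ⟨⟨i, by omega⟩, rfl⟩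
  have hslot := ((hp (0, Pi.single i.castSucc 1)).1).2 i.succ (by simp at hi ⊢; omega)
  rw [hmul] at hslot
  simpa using hslot

lemma annSucc_tailSubmodule (hbnd : ∀ x : U, (∀ y : U, b x y = 0) → x = 0)
    (hmul : IsMul b f mul) {j : ℕ} (hj : j ≤ m) :
    annSucc mul (tailSubmodule m j) = tailSubmodule m (j + 1) := by
  ext p
  refine ⟨fun hp => ?_, fun hp q => mul_mem_tailSubmodule_of_mem_succ hmul hp q⟩
  have hp1 := fst_eq_zero_of_mem_annSucc hbnd hmul hj hp
  exact ⟨hp1, fun _ => snd_eq_zero_of_mem_annSucc hmul hp hp1⟩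

lemma annSeq_eq_tailSubmodule (hbnd : ∀ x : U, (∀ y : U, b x y = 0) → x = 0)
    (hmul : IsMul b f mul) {j : ℕ} (hj : j ≤ m + 1) : annSeq mul j = tailSubmodule m j := by
  induction j with
  | zero => exact tailSubmodule_zero.symm
  | succ j ih =>
    rw [annSeq, ih (by omega)]
    exact annSucc_tailSubmodule hbnd hmul (by omega)

end EUbf

theorem EUbf_annSeq_general
    {U : Type*} [AddCommGroup U] [Module F U]
    (b : U →ₗ[F] U →ₗ[F] F)
    (hbnd : ∀ x : U, (∀ y : U, b x y = 0) → x = 0)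
    (m : ℕ)  -- the number of scalar factors is `k = m + 1`
    (f : Fin m → U →ₗ[F] U)
    (mul : (U × (Fin (m + 1) → F)) →ₗ[F] (U × (Fin (m + 1) → F)) →ₗ[F] (U × (Fin (m + 1) → F)))
    (hmul : ∀ (x y : U) (α β : Fin (m + 1) → F),
      mul (x, α) (y, β) =
        (0, Fin.cases (motive := fun _ => F) (b x y)
            (fun j : Fin m => b (f j x) y + α j.castSucc * β j.castSucc))) :
    (∀ j : ℕ, 1 ≤ j → j ≤ m + 1 →
      (annSeq mul j : Set (U × (Fin (m + 1) → F))) =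
        {p : U × (Fin (m + 1) → F) | p.1 = 0 ∧
          ∀ i : Fin (m + 1), (i : ℕ) + j < m + 1 → p.2 i = 0}) ∧
    annSeq mul (m + 2) = ⊤ := by
  refine ⟨fun j _ hj => by rw [EUbf.annSeq_eq_tailSubmodule hbnd hmul hj]; rfl, ?_⟩
  rw [annSeq, EUbf.annSeq_eq_tailSubmodule hbnd hmul le_rfl]
  exact annSucc_eq_top (EUbf.mul_mem_tailSubmodule_top hmul)

/-- For `E = E(U, b, f_1, …, f_{k-1})` (here `k = m+1`) one has, for
`j = 1, …, k`, `ann^j(E) = 0 × 0 × ⋯ × 0 × F × ⋯ × F` (zero in `U` and in the first `k - j`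
scalar slots, `F` in the last `j` scalar slots), and `ann^{k+1}(E) = E`. -/
theorem EUbf_annSeq
    (h2 : (2 : F) ≠ 0)
    {U : Type*} [AddCommGroup U] [Module F U] [FiniteDimensional F U]
    (n : ℕ) (hdimU : Module.finrank F U = n)
    (b : U →ₗ[F] U →ₗ[F] F)
    (hbsymm : ∀ x y : U, b x y = b y x)
    (hbnd : ∀ x : U, (∀ y : U, b x y = 0) → x = 0)
    (m : ℕ)  -- the number of scalar factors is `k = m + 1`
    (f : Fin m → U →ₗ[F] U)
    (hfcomm : ∀ i j, (f i).comp (f j) = (f j).comp (f i))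
    (hfsymm : ∀ (i : Fin m) (x y : U), b (f i x) y = b x (f i y))
    (hfdiag : ∀ i : Fin m, ∃ e : Module.Basis (Fin n) F U, ∀ j, ∃ μ : F, f i (e j) = μ • e j)
    (mul : (U × (Fin (m + 1) → F)) →ₗ[F] (U × (Fin (m + 1) → F)) →ₗ[F] (U × (Fin (m + 1) → F)))
    (hmul : ∀ (x y : U) (α β : Fin (m + 1) → F),
      mul (x, α) (y, β) =
        (0, Fin.cases (motive := fun _ => F) (b x y)
            (fun j : Fin m => b (f j x) y + α j.castSucc * β j.castSucc))) :
    (∀ j : ℕ, 1 ≤ j → j ≤ m + 1 →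
      (annSeq mul j : Set (U × (Fin (m + 1) → F))) =
        {p : U × (Fin (m + 1) → F) | p.1 = 0 ∧
          ∀ i : Fin (m + 1), (i : ℕ) + j < m + 1 → p.2 i = 0}) ∧
    annSeq mul (m + 2) = ⊤ :=
  EUbf_annSeq_general b hbnd m f mul hmul
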